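/- For all nonnegative integers n and \ell, and real number r, the r-Bell polynomials satisfy B_{n+\ell, r}(x) = \sum_{j=0}^{\ell} \sum_{k=0}^{n} S_r(\ell+r, j+r) \binom{n}{k} j^{n-k} B_{k,r}(x) x^j, where S_r denotes the r-Stirling numbers of the second kind. -/
import Mathlib

/-- The r-Stirling numbers of the second kind: `rStirling2 r n k` stands for
`S_r(n+r, k+r)`, satisfying the recurrence with factor `(k+r)`. -/
noncomputable def rStirling2 (r : ℝ) : ℕ → ℕ → ℝ
  | 0, 0 => 1
  | 0, _ + 1 => 0
  | n + 1, 0 => r * rStirling2 r n 0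
  | n + 1, k + 1 => rStirling2 r n k + ((k + 1 : ℝ) + r) * rStirling2 r n (k + 1)

/-- The r-Bell polynomial: the sum over k ≤ n of `S_r(n+r,k+r) * x^k`. -/
noncomputable def rBellPoly (r : ℝ) (n : ℕ) (x : ℝ) : ℝ :=
  ∑ k ∈ Finset.range (n + 1), rStirling2 r n k * x ^ k

open Finset


lemma rStirling2_succ_zero (r : ℝ) (n : ℕ) : rStirling2 r (n+1) 0 = r * rStirling2 r n 0 := by
  rw [rStirling2]

lemma rStirling2_succ_succ (r : ℝ) (n k : ℕ) :
    rStirling2 r (n+1) (k+1) = rStirling2 r n k + ((k:ℝ)+1+r) * rStirling2 r n (k+1) := by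
  rw [rStirling2]


lemma rStirling2_L (r : ℝ) : ∀ (m k : ℕ), ((k : ℝ) + 1) * rStirling2 r m (k + 1)
    = ∑ i ∈ range m, (m.choose i : ℝ) * rStirling2 r i k := by
  intro m
  induction m with
  | zero => intro k; simp [rStirling2]
  | succ m ih =>
    intro k
    have step : ∀ i ∈ range (m+1), ((m+1).choose i : ℝ) * rStirling2 r i k
        = ((m.choose i : ℝ) + (if i = 0 then 0 else (m.choose (i-1) : ℝ))) * rStirling2 r i k := by
      intro i _
      cases i with
      | zero => simp
      | succ i => rw [Nat.choose_succ_succ]; push_cast; simp [add_comm]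
    rw [sum_congr rfl step]
    simp only [add_mul, sum_add_distrib]
    rw [sum_range_succ]
    have h2 : ∑ i ∈ range (m+1), (if i = 0 then (0:ℝ) else (m.choose (i-1) : ℝ)) * rStirling2 r i k
        = ∑ i ∈ range m, (m.choose i : ℝ) * rStirling2 r (i+1) k := by
      rw [sum_range_succ']
      simp
    rw [h2]
    cases k with
    | zero =>
      have h3 : ∑ i ∈ range m, (m.choose i : ℝ) * rStirling2 r (i+1) 0
          = r * ∑ i ∈ range m, (m.choose i : ℝ) * rStirling2 r i 0 := by
        rw [mul_sum]
        exact sum_congr rfl fun i _ => by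
          rw [rStirling2_succ_zero]; ring
      rw [h3, ← ih 0]
      rw [show (1:ℕ) = 0 + 1 from rfl, rStirling2_succ_succ]
      push_cast [Nat.choose_self]
      ring
    | succ k =>
      have h3 : ∑ i ∈ range m, (m.choose i : ℝ) * rStirling2 r (i+1) (k+1)
          = (∑ i ∈ range m, (m.choose i : ℝ) * rStirling2 r i k)
            + (((k:ℝ)+1) + r) * ∑ i ∈ range m, (m.choose i : ℝ) * rStirling2 r i (k+1) := by
        rw [mul_sum, ← sum_add_distrib]
        exact sum_congr rfl fun i _ => by
          rw [rStirling2_succ_succ]; ring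
      rw [h3, ← ih k, ← ih (k+1)]
      rw [rStirling2_succ_succ]
      push_cast [Nat.choose_self]
      ring

lemma rStirling2_vanish (r : ℝ) : ∀ n k, n < k → rStirling2 r n k = 0 := by
  intro n
  induction n with
  | zero => intro k hk; obtain ⟨k, rfl⟩ := Nat.exists_eq_add_of_lt hk; simp [rStirling2]
  | succ n ih =>
    intro k hk
    obtain ⟨m, rfl⟩ : ∃ m, k = m + 1 := ⟨k - 1, by omega⟩
    rw [rStirling2_succ_succ, ih m (by omega), ih (m+1) (by omega)]
    ring

lemma rBellPoly_ext (r x : ℝ) {i m : ℕ} (h : i ≤ m) :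
    rBellPoly r i x = ∑ k ∈ range (m+1), rStirling2 r i k * x ^ k := by
  rw [rBellPoly]
  apply Finset.sum_subset (range_subset_range.2 (by omega))
  intro k _ hk2
  rw [rStirling2_vanish r i k (by simp at hk2; omega), zero_mul]

lemma rBellPoly_succ (r x : ℝ) (m : ℕ) :
    rBellPoly r (m+1) x = r * rBellPoly r m x
      + x * ∑ i ∈ range (m+1), (m.choose i : ℝ) * rBellPoly r i x := by
  have expand : ∀ k ∈ range (m+1), rStirling2 r (m+1) (k+1) * x^(k+1)
      = (rStirling2 r m k * x^k) * x + (r * rStirling2 r m (k+1)) * x^(k+1)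
        + (∑ i ∈ range m, (m.choose i : ℝ) * rStirling2 r i k) * x^(k+1) := by
    intro k _
    rw [rStirling2_succ_succ, ← rStirling2_L]
    ring
  conv_lhs => rw [rBellPoly]
  rw [sum_range_succ', sum_congr rfl expand]
  simp only [sum_add_distrib]
  have e1 : ∑ k ∈ range (m+1), (rStirling2 r m k * x^k) * x = x * rBellPoly r m x := by
    rw [rBellPoly, ← sum_mul]; ring
  have e2 : ∑ k ∈ range (m+1), (r * rStirling2 r m (k+1)) * x^(k+1)
      = r * rBellPoly r m x - r * (rStirling2 r m 0 * x ^ 0) := by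
    rw [sum_range_succ, rStirling2_vanish r m (m+1) (by omega), rBellPoly, sum_range_succ',
      mul_add, mul_sum]
    simp only [mul_zero, zero_mul, add_zero, mul_assoc]
    ring
  have e3 : ∑ k ∈ range (m+1), (∑ i ∈ range m, (m.choose i : ℝ) * rStirling2 r i k) * x^(k+1)
      = x * ∑ i ∈ range m, (m.choose i : ℝ) * rBellPoly r i x := by
    simp only [sum_mul]
    rw [mul_sum, sum_comm]
    apply sum_congr rfl
    intro i hi
    rw [rBellPoly_ext r x (le_of_lt (mem_range.1 hi)), mul_sum, mul_sum]
    apply sum_congr rfl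
    intro k _
    ring
  rw [e1, e2, e3, rStirling2_succ_zero]
  rw [sum_range_succ _ m, Nat.choose_self]
  push_cast
  ring


lemma chooseW (y : ℝ) : ∀ n i : ℕ, ∑ k ∈ range (n+1), (n.choose k : ℝ) * (k.choose i : ℝ) * y^(n-k)
    = (n.choose i : ℝ) * (y+1)^(n-i) := by
  intro n
  induction n with
  | zero => intro i; simp
  | succ n ih =>
    intro i
    have step : ∀ k ∈ range (n+2), ((n+1).choose k : ℝ) * (k.choose i : ℝ) * y^(n+1-k)
        = (n.choose k : ℝ) * (k.choose i : ℝ) * y^(n+1-k)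
          + (if k = 0 then 0 else (n.choose (k-1) : ℝ)) * (k.choose i : ℝ) * y^(n+1-k) := by
      intro k _
      cases k with
      | zero => simp
      | succ k => rw [Nat.choose_succ_succ]; push_cast; simp; ring
    rw [sum_congr rfl step, sum_add_distrib]
    have t1 : ∑ k ∈ range (n+2), (n.choose k : ℝ) * (k.choose i : ℝ) * y^(n+1-k)
        = y * ((n.choose i : ℝ) * (y+1)^(n-i)) := by
      rw [sum_range_succ, Nat.choose_eq_zero_of_lt (by omega), ← ih i, mul_sum]
      push_cast
      simp only [mul_zero, zero_mul, add_zero]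
      apply sum_congr rfl
      intro k hk
      have hk' : k ≤ n := by simp at hk; omega
      rw [show n+1-k = (n-k)+1 by omega, pow_succ]
      ring
    have t2 : ∑ k ∈ range (n+2), (if k = 0 then (0:ℝ) else (n.choose (k-1) : ℝ)) * (k.choose i : ℝ) * y^(n+1-k)
        = ∑ k ∈ range (n+1), (n.choose k : ℝ) * ((k+1).choose i : ℝ) * y^(n-k) := by
      rw [sum_range_succ']
      simp
    rw [t1, t2]
    cases i with
    | zero =>
      simp only [Nat.choose_zero_right, Nat.cast_one, mul_one, Nat.sub_zero]
      have hb : (y+1)^n = ∑ k ∈ range (n+1), (n.choose k : ℝ) * y^(n-k) := by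
        rw [add_comm y 1, add_pow]
        apply sum_congr rfl
        intro k hk
        simp
        ring
      rw [pow_succ, hb]
      ring
    | succ i =>
      have step2 : ∀ k ∈ range (n+1), (n.choose k : ℝ) * ((k+1).choose (i+1) : ℝ) * y^(n-k)
          = (n.choose k : ℝ) * (k.choose i : ℝ) * y^(n-k)
            + (n.choose k : ℝ) * (k.choose (i+1) : ℝ) * y^(n-k) := by
        intro k _
        rw [Nat.choose_succ_succ]; push_cast; ring
      rw [sum_congr rfl step2, sum_add_distrib, ih i, ih (i+1)]
      rw [Nat.choose_succ_succ n i]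
      have he : n - i = n + 1 - (i+1) := by omega
      rcases le_or_gt (i+1) n with h | h
      · rw [show n+1-(i+1) = (n-(i+1))+1 by omega, show n-i = (n-(i+1))+1 by omega, pow_succ]
        push_cast
        ring
      · rw [Nat.choose_eq_zero_of_lt h]
        push_cast
        rw [he]
        ring

lemma chooseV (y : ℝ) (B : ℕ → ℝ) (n : ℕ) :
    ∑ k ∈ range (n+1), (n.choose k : ℝ) * y^(n-k) * ∑ i ∈ range (k+1), (k.choose i : ℝ) * B i
      = ∑ i ∈ range (n+1), (n.choose i : ℝ) * (y+1)^(n-i) * B i := by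
  have ext : ∀ k ∈ range (n+1), (n.choose k : ℝ) * y^(n-k) * ∑ i ∈ range (k+1), (k.choose i : ℝ) * B i
      = ∑ i ∈ range (n+1), (n.choose k : ℝ) * (k.choose i : ℝ) * y^(n-k) * B i := by
    intro k hk
    rw [mul_sum]
    have hext : ∑ i ∈ range (k+1), (n.choose k : ℝ) * y^(n-k) * ((k.choose i : ℝ) * B i)
        = ∑ i ∈ range (n+1), (n.choose k : ℝ) * y^(n-k) * ((k.choose i : ℝ) * B i) := by
      apply sum_subset (range_subset_range.2 (show k+1 ≤ n+1 by simp at hk; omega))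
      intro i _ hi
      rw [Nat.choose_eq_zero_of_lt (show k < i by simp at hi; omega)]
      simp
    rw [hext]
    exact sum_congr rfl fun i _ => by ring
  rw [sum_congr rfl ext, sum_comm]
  apply sum_congr rfl
  intro i _
  rw [← chooseW y n i, sum_mul]

noncomputable def Qf (r x : ℝ) (n : ℕ) (y : ℝ) : ℝ :=
  ∑ k ∈ range (n+1), (n.choose k : ℝ) * y^(n-k) * rBellPoly r k x

lemma Qf_succ (r x y : ℝ) (n : ℕ) :
    Qf r x (n+1) y = (y + r) * Qf r x n y + x * Qf r x n (y+1) := by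
  rw [Qf, sum_range_succ']
  have e0 : ∀ k ∈ range (n+1), ((n+1).choose (k+1) : ℝ) * y^(n+1-(k+1)) * rBellPoly r (k+1) x
      = (n.choose k : ℝ) * y^(n-k) * rBellPoly r (k+1) x
        + (n.choose (k+1) : ℝ) * y^(n-k) * rBellPoly r (k+1) x := by
    intro k _
    rw [Nat.choose_succ_succ, Nat.succ_sub_succ]; push_cast; ring
  rw [sum_congr rfl e0, sum_add_distrib]
  have e1 : (∑ k ∈ range (n+1), (n.choose (k+1) : ℝ) * y^(n-k) * rBellPoly r (k+1) x)
        + ((n+1).choose 0 : ℝ) * y^(n+1-0) * rBellPoly r 0 x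
      = y * Qf r x n y := by
    rw [Qf, mul_sum, sum_range_succ _ n, Nat.choose_succ_self, sum_range_succ']
    simp only [Nat.cast_zero, zero_mul, add_zero, Nat.choose_zero_right, Nat.cast_one, one_mul,
      Nat.sub_zero, Nat.succ_sub_succ]
    congr 1
    · apply sum_congr rfl
      intro k hk
      have hk' : k < n := mem_range.1 hk
      rw [show n - k = (n-(k+1))+1 by omega, pow_succ]
      ring
    · rw [pow_succ]
      ring
  have e2 : ∑ k ∈ range (n+1), (n.choose k : ℝ) * y^(n-k) * rBellPoly r (k+1) x
      = r * Qf r x n y + x * Qf r x n (y+1) := by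
    have e2a : ∀ k ∈ range (n+1), (n.choose k : ℝ) * y^(n-k) * rBellPoly r (k+1) x
        = r * ((n.choose k : ℝ) * y^(n-k) * rBellPoly r k x)
          + x * ((n.choose k : ℝ) * y^(n-k) * ∑ i ∈ range (k+1), (k.choose i : ℝ) * rBellPoly r i x) := by
      intro k _
      rw [rBellPoly_succ]; ring
    rw [sum_congr rfl e2a, sum_add_distrib, ← mul_sum, ← mul_sum,
      chooseV y (fun i => rBellPoly r i x) n, Qf, Qf]
  rw [add_assoc, e1, e2]
  ring

noncomputable def Rr (r x : ℝ) (n ℓ : ℕ) : ℝ :=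
  ∑ j ∈ range (ℓ+1), ∑ k ∈ range (n+1),
    rStirling2 r ℓ j * (n.choose k : ℝ) * (j:ℝ)^(n-k) * rBellPoly r k x * x^j

lemma Rr_eq (r x : ℝ) (n ℓ : ℕ) :
    Rr r x n ℓ = ∑ j ∈ range (ℓ+1), rStirling2 r ℓ j * Qf r x n (j:ℝ) * x^j := by
  rw [Rr]
  apply sum_congr rfl
  intro j _
  rw [Qf, mul_sum, sum_mul]
  exact sum_congr rfl fun k _ => by ring

lemma sum_shift (ℓ : ℕ) (f : ℕ → ℝ) (hf : f (ℓ+1) = 0) :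
    (∑ j ∈ range (ℓ+1), f (j+1)) + f 0 = ∑ j ∈ range (ℓ+1), f j := by
  rw [← sum_range_succ' f (ℓ+1), sum_range_succ, hf, add_zero]

lemma transfer (r x : ℝ) (n ℓ : ℕ) : Rr r x (n+1) ℓ = Rr r x n (ℓ+1) := by
  rw [Rr_eq, Rr_eq]
  have hL : ∀ j ∈ range (ℓ+1), rStirling2 r ℓ j * Qf r x (n+1) (j:ℝ) * x^j
      = (j:ℝ) * (rStirling2 r ℓ j * Qf r x n (j:ℝ) * x^j)
        + r * (rStirling2 r ℓ j * Qf r x n (j:ℝ) * x^j)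
        + x * (rStirling2 r ℓ j * Qf r x n ((j:ℝ)+1) * x^j) := by
    intro j _; rw [Qf_succ]; ring
  rw [sum_congr rfl hL]
  simp only [sum_add_distrib]
  rw [sum_range_succ' _ (ℓ+1)]
  set g : ℕ → ℝ := fun j => (j:ℝ) * (rStirling2 r ℓ j * Qf r x n (j:ℝ) * x^j) with hg
  set f : ℕ → ℝ := fun j => r * (rStirling2 r ℓ j * Qf r x n (j:ℝ) * x^j) with hf
  have hR : ∀ j ∈ range (ℓ+1), rStirling2 r (ℓ+1) (j+1) * Qf r x n ((j+1:ℕ):ℝ) * x^(j+1)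
      = x * (rStirling2 r ℓ j * Qf r x n ((j:ℝ)+1) * x^j)
        + g (j+1) + f (j+1) := by
    intro j _
    rw [rStirling2_succ_succ, hg, hf]
    push_cast
    ring
  rw [sum_congr rfl hR]
  simp only [sum_add_distrib]
  have h0 : rStirling2 r (ℓ+1) 0 * Qf r x n ((0:ℕ):ℝ) * x^0 = f 0 := by
    rw [rStirling2_succ_zero, hf]
    push_cast
    ring
  have hgsum : (∑ j ∈ range (ℓ+1), g (j+1)) + g 0
      = ∑ j ∈ range (ℓ+1), g j := by
    apply sum_shift
    rw [hg]
    simp only [rStirling2_vanish r ℓ (ℓ+1) (by omega)]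
    ring
  have hfsum : (∑ j ∈ range (ℓ+1), f (j+1)) + f 0
      = ∑ j ∈ range (ℓ+1), f j := by
    apply sum_shift
    rw [hf]
    simp only [rStirling2_vanish r ℓ (ℓ+1) (by omega)]
    ring
  have hg0 : g 0 = 0 := by rw [hg]; simp
  rw [h0]
  rw [← hgsum, ← hfsum, hg0]
  ring

lemma Rr_zero (r x : ℝ) (m : ℕ) : Rr r x 0 m = rBellPoly r m x := by
  rw [Rr, rBellPoly]
  apply sum_congr rfl
  intro j _
  rw [sum_range_one]
  simp [rBellPoly, rStirling2]

lemma Rr_full (r x : ℝ) : ∀ n ℓ, Rr r x n ℓ = rBellPoly r (n + ℓ) x := by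
  intro n
  induction n with
  | zero => intro ℓ; rw [Rr_zero]; norm_num
  | succ n ih =>
    intro ℓ
    rw [transfer, ih (ℓ+1), show n + (ℓ+1) = n + 1 + ℓ by omega]

theorem rBellPoly_spivey (n ℓ : ℕ) (r x : ℝ) :
    rBellPoly r (n + ℓ) x =
      ∑ j ∈ Finset.range (ℓ + 1), ∑ k ∈ Finset.range (n + 1),
        rStirling2 r ℓ j * (n.choose k : ℝ) * (j : ℝ) ^ (n - k) *
          rBellPoly r k x * x ^ j := by
  rw [show (∑ j ∈ Finset.range (ℓ + 1), ∑ k ∈ Finset.range (n + 1),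
        rStirling2 r ℓ j * (n.choose k : ℝ) * (j : ℝ) ^ (n - k) *
          rBellPoly r k x * x ^ j) = Rr r x n ℓ from rfl, Rr_full]
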